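/- Converse result for noisy data: let A be an accretive bounded linear operator on a Hilbert space H, let u ∈ H, and let 0 < p ≤ 1. Define P_δ(u) = sup over Δ ∈ H with ‖Δ‖ ≤ δ of the inf over γ > 0 of ‖-γ(A + γI)⁻¹u + (A + γI)⁻¹Δ‖. If P_δ(u) = O(δ^{p/(p+1)}) as δ → 0 from the right, then ‖γ(A + γI)⁻¹u‖ = O(γ^p) as γ → 0 from the right. -/

import Mathlib

open Filter Asymptotics
open scoped Topology InnerProductSpace

/-!
If `‖R_γ u‖` stays bounded, then `γ ‖R_γ u‖ = O(γ) = O(γ ^ p)` near `0`. Otherwise, for small `c`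
choose `b` with `c ‖R_b u‖ ≥ 4 ‖u‖` and the noise `Δ = -σ R_b u` of size `δ = 2c · c ‖R_c u‖`.
Accretivity makes the real parts of the inner products of `R_β u` and `R_β R_b u` nonnegative,
so the error `‖β R_β u + σ R_β R_b u‖` of every parameter `β` is at least `c ‖R_c u‖`. Hence
`c ‖R_c u‖ ≤ P_δ(u) ≤ K δ ^ (p / (p + 1))`, which solves to `c ‖R_c u‖ ≤ K ^ (p + 1) (2c) ^ p`.
-/

lemma le_mul_rpow_of_le_mul_mul_rpow {g x K p : ℝ} (hg : 0 ≤ g) (hx : 0 ≤ x) (hK : 0 ≤ K)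
    (hp : 0 < p) (h : g ≤ K * (x * g) ^ (p / (p + 1))) : g ≤ K ^ (p + 1) * x ^ p := by
  rcases hg.eq_or_lt with rfl | hg
  · positivity
  have hpow := Real.rpow_le_rpow hg.le h (by positivity : 0 ≤ p + 1)
  rw [Real.mul_rpow hK (by positivity), ← Real.rpow_mul (by positivity),
    div_mul_cancel₀ _ (by positivity : p + 1 ≠ 0), Real.mul_rpow hx hg.le,
    Real.rpow_add_one hg.ne', ← mul_assoc, mul_comm (g ^ p)] at hpow
  exact le_of_mul_le_mul_left (by linarith) (Real.rpow_pos_of_pos hg p)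

section Normed

variable {𝕜 : Type*} [RCLike 𝕜] {E : Type*} [NormedAddCommGroup E] [NormedSpace 𝕜 E]

/-- `P_δ(u)`, for the resolvents `R γ = (A + γ I)⁻¹`. -/
noncomputable def maxBestError (R : ℝ → E →L[𝕜] E) (u : E) (δ : ℝ) : ℝ :=
  ⨆ Δ : {Δ : E // ‖Δ‖ ≤ δ}, ⨅ γ : {γ : ℝ // 0 < γ}, ‖-((γ.1 : 𝕜) • R γ.1 u) + R γ.1 Δ.1‖

lemma le_maxBestError (R : ℝ → E →L[𝕜] E) (u : E) {δ m : ℝ} {Δ : E} (hΔ : ‖Δ‖ ≤ δ)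
    (h : ∀ γ : ℝ, 0 < γ → m ≤ ‖-((γ : 𝕜) • R γ u) + R γ Δ‖) : m ≤ maxBestError R u δ := by
  have : Nonempty {γ : ℝ // 0 < γ} := ⟨⟨1, one_pos⟩⟩
  have hbdd : BddAbove (Set.range fun Δ' : {Δ' : E // ‖Δ'‖ ≤ δ} =>
      ⨅ γ : {γ : ℝ // 0 < γ}, ‖-((γ.1 : 𝕜) • R γ.1 u) + R γ.1 Δ'.1‖) := by
    refine ⟨‖R 1 u‖ + ‖R 1‖ * δ, ?_⟩
    rintro _ ⟨⟨Δ', hΔ'⟩, rfl⟩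
    refine (ciInf_le ⟨0, ?_⟩ ⟨1, one_pos⟩).trans ?_
    · rintro _ ⟨γ, rfl⟩
      exact norm_nonneg _
    refine (norm_add_le _ _).trans (add_le_add ?_ ?_)
    · simp
    · exact (R 1).le_opNorm_of_le hΔ'
  exact (le_ciInf fun γ : {γ : ℝ // 0 < γ} => h γ.1 γ.2).trans (le_ciSup hbdd ⟨Δ, hΔ⟩)

lemma isBigO_ofReal_smul_rpow_of_norm_le {f : ℝ → E} {B p : ℝ}
    (hf : ∀ γ : ℝ, 0 < γ → ‖f γ‖ ≤ B) (hp : p ≤ 1) :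
    (fun γ : ℝ => (γ : 𝕜) • f γ) =O[𝓝[>] 0] fun γ => γ ^ p := by
  refine IsBigO.of_bound B ?_
  filter_upwards [Ioo_mem_nhdsGT one_pos] with γ ⟨hγ0, hγ1⟩
  rw [norm_smul, RCLike.norm_ofReal, abs_of_pos hγ0, Real.norm_of_nonneg (by positivity),
    mul_comm]
  have hγp : γ ≤ γ ^ p := by
    simpa using Real.rpow_le_rpow_of_exponent_ge hγ0 hγ1.le hp
  exact mul_le_mul (hf γ hγ0) hγp hγ0.le ((norm_nonneg _).trans (hf γ hγ0))

end Normed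

section Accretive

variable {𝕜 : Type*} [RCLike 𝕜] {H : Type*} [NormedAddCommGroup H] [InnerProductSpace 𝕜 H]

def IsAccretive (A : H →L[𝕜] H) : Prop :=
  ∀ v : H, 0 ≤ RCLike.re ⟪A v, v⟫_𝕜

def IsResolventAt (A : H →L[𝕜] H) (γ : ℝ) (T : H →L[𝕜] H) : Prop :=
  (A + (γ : 𝕜) • (1 : H →L[𝕜] H)).comp T = 1 ∧ T.comp (A + (γ : 𝕜) • (1 : H →L[𝕜] H)) = 1

lemma re_inner_smul_add_smul (a b : H) (s t : ℝ) :
    RCLike.re ⟪a, (s : 𝕜) • a + (t : 𝕜) • b⟫_𝕜 = s * ‖a‖ ^ 2 + t * RCLike.re ⟪a, b⟫_𝕜 := by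
  rw [inner_add_right, map_add, inner_smul_real_right, inner_smul_real_right, RCLike.smul_re,
    RCLike.smul_re, inner_self_eq_norm_sq]

lemma mul_norm_le_norm_smul_add_smul {a b : H} (hab : 0 ≤ RCLike.re ⟪a, b⟫_𝕜) {s t : ℝ}
    (ht : 0 ≤ t) : s * ‖a‖ ≤ ‖(s : 𝕜) • a + (t : 𝕜) • b‖ := by
  rcases (norm_nonneg a).eq_or_lt with ha | ha
  · rw [← ha, mul_zero]
    exact norm_nonneg _
  have key : s * ‖a‖ ^ 2 ≤ ‖a‖ * ‖(s : 𝕜) • a + (t : 𝕜) • b‖ := by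
    calc s * ‖a‖ ^ 2 ≤ RCLike.re ⟪a, (s : 𝕜) • a + (t : 𝕜) • b⟫_𝕜 := by
          rw [re_inner_smul_add_smul]
          nlinarith
      _ ≤ _ := re_inner_le_norm _ _
  nlinarith

namespace IsAccretive

variable {A : H →L[𝕜] H}

lemma re_inner_apply_right_nonneg (hA : IsAccretive A) (v : H) : 0 ≤ RCLike.re ⟪v, A v⟫_𝕜 := by
  rw [inner_re_symm]
  exact hA v

lemma re_inner_add_smul_nonneg (hA : IsAccretive A) (v : H) {γ : ℝ} (hγ : 0 ≤ γ) :
    0 ≤ RCLike.re ⟪v, A v + (γ : 𝕜) • v⟫_𝕜 := by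
  have h := re_inner_smul_add_smul (𝕜 := 𝕜) v (A v) γ 1
  rw [RCLike.ofReal_one, one_smul, add_comm] at h
  rw [h]
  have := hA.re_inner_apply_right_nonneg v
  positivity

lemma mul_norm_le_norm_add_smul (hA : IsAccretive A) (v : H) (γ : ℝ) :
    γ * ‖v‖ ≤ ‖A v + (γ : 𝕜) • v‖ := by
  simpa [add_comm] using
    mul_norm_le_norm_smul_add_smul (hA.re_inner_apply_right_nonneg v) (s := γ) zero_le_one

end IsAccretive

namespace IsResolventAt

variable {A T S : H →L[𝕜] H} {β b : ℝ}

lemma add_smul_apply (hT : IsResolventAt A β T) (x : H) : A (T x) + (β : 𝕜) • T x = x := by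
  simpa using congrArg (fun L : H →L[𝕜] H => L x) hT.1

lemma apply_add_smul (hT : IsResolventAt A β T) (x : H) : T (A x + (β : 𝕜) • x) = x := by
  simpa using congrArg (fun L : H →L[𝕜] H => L x) hT.2

lemma apply_apply_comm (hT : IsResolventAt A β T) (x : H) : A (T x) = T (A x) := by
  have h := hT.apply_add_smul x
  rw [map_add, map_smul] at h
  rw [eq_sub_of_add_eq (hT.add_smul_apply x), ← eq_sub_of_add_eq h]

lemma mul_norm_apply_le (hA : IsAccretive A) (hT : IsResolventAt A β T) (x : H) :
    β * ‖T x‖ ≤ ‖x‖ := by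
  simpa only [hT.add_smul_apply] using hA.mul_norm_le_norm_add_smul (T x) β

lemma re_inner_apply_nonneg (hA : IsAccretive A) (hT : IsResolventAt A β T) (hβ : 0 ≤ β)
    (x : H) : 0 ≤ RCLike.re ⟪x, T x⟫_𝕜 := by
  rw [inner_re_symm]
  simpa only [hT.add_smul_apply] using hA.re_inner_add_smul_nonneg (T x) hβ

/-- The resolvent identity. -/
lemma apply_eq_add_smul (hT : IsResolventAt A β T) (hS : IsResolventAt A b S) (x : H) :
    T x = S x + ((b - β : ℝ) : 𝕜) • T (S x) := by
  have h : A (S x) + (β : 𝕜) • S x + ((b - β : ℝ) : 𝕜) • S x = x := by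
    rw [add_assoc, ← add_smul, RCLike.ofReal_sub, add_sub_cancel, hS.add_smul_apply]
  conv_lhs => rw [← h]
  rw [map_add, hT.apply_add_smul, map_smul]

lemma norm_apply_le_of_le (hA : IsAccretive A) (hT : IsResolventAt A β T)
    (hS : IsResolventAt A b S) (hβ : 0 ≤ β) (hβb : β ≤ b) (x : H) : ‖S x‖ ≤ ‖T x‖ := by
  have h := mul_norm_le_norm_smul_add_smul (s := 1) (hT.re_inner_apply_nonneg hA hβ (S x))
    (sub_nonneg.mpr hβb)
  rwa [one_mul, RCLike.ofReal_one, one_smul, ← hT.apply_eq_add_smul hS] at h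

lemma mul_norm_apply_le_mul_norm_apply (hA : IsAccretive A) (hT : IsResolventAt A β T)
    (hS : IsResolventAt A b S) (hβ : 0 ≤ β) (hβb : β ≤ b) (x : H) :
    β * ‖T x‖ ≤ b * ‖S x‖ := by
  have h : ‖T x‖ ≤ ‖S x‖ + (b - β) * ‖T (S x)‖ := by
    rw [hT.apply_eq_add_smul hS x]
    refine (norm_add_le _ _).trans_eq ?_
    rw [norm_smul, RCLike.norm_ofReal, abs_of_nonneg (sub_nonneg.mpr hβb)]
  have := hT.mul_norm_apply_le hA (S x)
  nlinarith [sub_nonneg.mpr hβb]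

lemma re_inner_apply_apply_nonneg (hA : IsAccretive A) (hT : IsResolventAt A β T)
    (hS : IsResolventAt A b S) (hb : 0 ≤ b) (x : H) :
    0 ≤ RCLike.re ⟪T (S x), T x⟫_𝕜 := by
  have h : A (T (S x)) + (b : 𝕜) • T (S x) = T x := by
    rw [hT.apply_apply_comm, ← map_smul, ← map_add, hS.add_smul_apply]
  rw [← h]
  exact hA.re_inner_add_smul_nonneg _ hb

lemma mul_norm_sub_norm_le (hA : IsAccretive A) (hT : IsResolventAt A β T) (hβ : 0 ≤ β)
    (x : H) : β * ‖x‖ - ‖A x‖ ≤ β ^ 2 * ‖T x‖ := by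
  have h : x = T (A x) + (β : 𝕜) • T x := by rw [← map_smul, ← map_add, hT.apply_add_smul]
  have h1 : ‖x‖ ≤ ‖T (A x)‖ + β * ‖T x‖ := by
    conv_lhs => rw [h]
    refine (norm_add_le _ _).trans_eq ?_
    rw [norm_smul, RCLike.norm_ofReal, abs_of_nonneg hβ]
  have h2 := hT.mul_norm_apply_le hA (A x)
  nlinarith

lemma norm_apply_le_two_mul (hA : IsAccretive A) (hS : IsResolventAt A b S) (hb : 0 ≤ b) (x : H) :
    ‖A (S x)‖ ≤ 2 * ‖x‖ := by
  rw [eq_sub_of_add_eq (hS.add_smul_apply x)]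
  refine (norm_sub_le _ _).trans ?_
  rw [norm_smul, RCLike.norm_ofReal, abs_of_nonneg hb]
  linarith [hS.mul_norm_apply_le hA x]

end IsResolventAt

variable {A : H →L[𝕜] H} {R : ℝ → H →L[𝕜] H} {u : H}

/-- The right-hand side is the error of parameter `β` for the noise `Δ = -σ R_b u`. For `β ≥ c`
its approximation part alone is at least `c ‖R_c u‖`; for `β < c` its noise part is, because
`R_b u` is large. -/
lemma mul_norm_le_norm_smul_add_smul_resolvent (hA : IsAccretive A)
    (hR : ∀ γ : ℝ, 0 < γ → IsResolventAt A γ (R γ)) {β b c σ : ℝ} (hβ : 0 < β) (hb : 0 < b)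
    (hc : 0 < c) (hσ : 0 ≤ σ) (hσu : 2 * c * (c * ‖R c u‖) ≤ σ * ‖R b u‖)
    (hbu : 4 * ‖u‖ ≤ c * ‖R b u‖) :
    c * ‖R c u‖ ≤ ‖(β : 𝕜) • R β u + (σ : 𝕜) • R β (R b u)‖ := by
  have hcross := (hR β hβ).re_inner_apply_apply_nonneg hA (hR b hb) hb.le u
  rcases le_or_gt c β with hcβ | hβc
  · calc c * ‖R c u‖ ≤ β * ‖R β u‖ :=
          (hR c hc).mul_norm_apply_le_mul_norm_apply hA (hR β hβ) hc.le hcβ u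
      _ ≤ _ := mul_norm_le_norm_smul_add_smul (by rwa [inner_re_symm]) hσ
  · have hRc : c * ‖R b u‖ - 2 * ‖u‖ ≤ c ^ 2 * ‖R c (R b u)‖ :=
      ((hR c hc).mul_norm_sub_norm_le hA hc.le _).trans' <|
        sub_le_sub_left ((hR b hb).norm_apply_le_two_mul hA hb.le u) _
    have hRβ : ‖R c (R b u)‖ ≤ ‖R β (R b u)‖ :=
      (hR β hβ).norm_apply_le_of_le hA (hR c hc) hβ.le hβc.le _
    have hσβ : σ * ‖R β (R b u)‖ ≤ ‖(β : 𝕜) • R β u + (σ : 𝕜) • R β (R b u)‖ := by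
      rw [add_comm]
      exact mul_norm_le_norm_smul_add_smul hcross hβ.le
    have : c * ‖R c u‖ ≤ σ * ‖R β (R b u)‖ := by
      refine le_of_mul_le_mul_left ?_ (by positivity : 0 < 2 * c ^ 2)
      have hmb : c * ‖R b u‖ ≤ 2 * c ^ 2 * ‖R c (R b u)‖ := by linarith
      calc 2 * c ^ 2 * (c * ‖R c u‖) = c * (2 * c * (c * ‖R c u‖)) := by ring
        _ ≤ σ * (c * ‖R b u‖) := by nlinarith
        _ ≤ σ * (2 * c ^ 2 * ‖R c (R b u)‖) := mul_le_mul_of_nonneg_left hmb hσ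
        _ ≤ 2 * c ^ 2 * (σ * ‖R β (R b u)‖) := by nlinarith [mul_le_mul_of_nonneg_left hRβ hσ]
    linarith

lemma mul_norm_resolvent_le_maxBestError (hA : IsAccretive A)
    (hR : ∀ γ : ℝ, 0 < γ → IsResolventAt A γ (R γ)) (hunb : ∀ B, ∃ γ : ℝ, 0 < γ ∧ B < ‖R γ u‖)
    {c : ℝ} (hc : 0 < c) : c * ‖R c u‖ ≤ maxBestError R u (2 * c * (c * ‖R c u‖)) := by
  obtain ⟨b, hb, hbu⟩ := hunb (4 * ‖u‖ / c)
  have hRbu : 0 < ‖R b u‖ := (by positivity : 0 ≤ 4 * ‖u‖ / c).trans_lt hbu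
  set σ := 2 * c * (c * ‖R c u‖) / ‖R b u‖
  have hσ : σ * ‖R b u‖ = 2 * c * (c * ‖R c u‖) := div_mul_cancel₀ _ hRbu.ne'
  have hσ0 : 0 ≤ σ := by positivity
  refine le_maxBestError R u (Δ := -((σ : 𝕜) • R b u)) ?_ fun β hβ => ?_
  · rw [norm_neg, norm_smul, RCLike.norm_ofReal, abs_of_nonneg hσ0, hσ]
  · rw [map_neg, map_smul, ← neg_add, norm_neg]
    refine mul_norm_le_norm_smul_add_smul_resolvent hA hR hβ hb hc hσ0 hσ.ge ?_
    exact ((div_lt_iff₀' hc).mp hbu).le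

lemma isBigO_ofReal_smul_resolvent_of_maxBestError (hA : IsAccretive A)
    (hR : ∀ γ : ℝ, 0 < γ → IsResolventAt A γ (R γ)) (hunb : ∀ B, ∃ γ : ℝ, 0 < γ ∧ B < ‖R γ u‖)
    {p : ℝ} (hp : 0 < p) (hP : maxBestError R u =O[𝓝[>] 0] fun δ => δ ^ (p / (p + 1))) :
    (fun γ : ℝ => (γ : 𝕜) • R γ u) =O[𝓝[>] 0] fun γ => γ ^ p := by
  obtain ⟨K, hK, hPK⟩ := hP.exists_nonneg
  set g : ℝ → ℝ := fun c => c * ‖R c u‖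
  have hg : ∀ c : ℝ, 0 < c → 0 ≤ g c ∧ g c ≤ ‖u‖ := fun c hc =>
    ⟨by positivity, (hR c hc).mul_norm_apply_le hA u⟩
  have hδ : Tendsto (fun c => 2 * c * g c) (𝓝[>] 0) (𝓝 0) := by
    have h2u : Tendsto (fun c : ℝ => 2 * c * ‖u‖) (𝓝[>] 0) (𝓝 0) :=
      tendsto_nhdsWithin_of_tendsto_nhds <|
        (by fun_prop : Continuous fun c : ℝ => 2 * c * ‖u‖).tendsto' 0 0 (by simp)
    refine squeeze_zero' ?_ ?_ h2u
    · filter_upwards [self_mem_nhdsWithin] with c (hc : 0 < c)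
      have := (hg c hc).1
      positivity
    · filter_upwards [self_mem_nhdsWithin] with c (hc : 0 < c)
      have := (hg c hc).2
      gcongr
  refine IsBigO.of_bound (K ^ (p + 1) * 2 ^ p) ?_
  filter_upwards [hδ.eventually (eventually_nhdsWithin_iff.mp hPK.bound), self_mem_nhdsWithin]
    with c hcP (hc : 0 < c)
  have hgc : g c ≤ K * (2 * c * g c) ^ (p / (p + 1)) := by
    rcases (hg c hc).1.eq_or_lt with h | h
    · rw [← h]
      exact mul_nonneg hK (Real.rpow_nonneg (by positivity) _)
    · have hPc := hcP (Set.mem_Ioi.mpr (by positivity))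
      rw [Real.norm_eq_abs, Real.norm_of_nonneg (by positivity)] at hPc
      exact (mul_norm_resolvent_le_maxBestError hA hR hunb hc).trans ((le_abs_self _).trans hPc)
  rw [norm_smul, RCLike.norm_ofReal, abs_of_pos hc, Real.norm_of_nonneg (by positivity), mul_assoc,
    ← Real.mul_rpow (by norm_num) hc.le]
  exact le_mul_rpow_of_le_mul_mul_rpow (hg c hc).1 (by positivity) hK hp hgc

end Accretive

theorem lavrentiev_converse_noisy_data_general
    {𝕜 : Type*} [RCLike 𝕜] {H : Type*} [NormedAddCommGroup H]
    [InnerProductSpace 𝕜 H]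
    (A : H →L[𝕜] H)
    (hacc : ∀ v : H, 0 ≤ RCLike.re (inner 𝕜 (A v) v : 𝕜))
    (R : ℝ → H →L[𝕜] H)
    (hinv : ∀ γ : ℝ, 0 < γ →
      (A + (γ : 𝕜) • (1 : H →L[𝕜] H)).comp (R γ) = 1 ∧
      (R γ).comp (A + (γ : 𝕜) • (1 : H →L[𝕜] H)) = 1)
    (u : H) (p : ℝ) (hp0 : 0 < p) (hp1 : p ≤ 1)
    (hP : (fun δ : ℝ => ⨆ Δ : {Δ : H // ‖Δ‖ ≤ δ}, ⨅ γ : {γ : ℝ // 0 < γ},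
        ‖-((γ.1 : 𝕜) • R γ.1 u) + R γ.1 Δ.1‖)
      =O[𝓝[>] (0 : ℝ)] (fun δ : ℝ => δ ^ (p / (p + 1)))) :
    (fun γ : ℝ => (γ : 𝕜) • R γ u) =O[𝓝[>] (0 : ℝ)] (fun γ : ℝ => γ ^ p) := by
  by_cases hbdd : ∃ B, ∀ γ : ℝ, 0 < γ → ‖R γ u‖ ≤ B
  · obtain ⟨B, hB⟩ := hbdd
    exact isBigO_ofReal_smul_rpow_of_norm_le hB hp1
  · push Not at hbdd
    exact isBigO_ofReal_smul_resolvent_of_maxBestError hacc hinv hbdd hp0 hP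

/-- converse result for noisy data. Let `A` be accretive on a Hilbert
space `H` with resolvent family `R γ = (A + γ I)⁻¹`, `u ∈ H` and `0 < p ≤ 1`. If the
maximal best possible error
`P_δ(u) = sup_{‖Δ‖≤δ} inf_{γ>0} ‖-γ(A+γI)⁻¹u + (A+γI)⁻¹Δ‖` satisfies
`P_δ(u) = O(δ^{p/(p+1)})` as `δ → 0⁺`, then `‖γ(A+γI)⁻¹u‖ = O(γ^p)` as `γ → 0⁺`. -/
theorem lavrentiev_converse_noisy_data
    {𝕜 : Type*} [RCLike 𝕜] {H : Type*} [NormedAddCommGroup H]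
    [InnerProductSpace 𝕜 H] [CompleteSpace H]
    (A : H →L[𝕜] H)
    (hacc : ∀ v : H, 0 ≤ RCLike.re (inner 𝕜 (A v) v : 𝕜))
    (R : ℝ → H →L[𝕜] H)
    (hinv : ∀ γ : ℝ, 0 < γ →
      (A + (γ : 𝕜) • (1 : H →L[𝕜] H)).comp (R γ) = 1 ∧
      (R γ).comp (A + (γ : 𝕜) • (1 : H →L[𝕜] H)) = 1)
    (u : H) (p : ℝ) (hp0 : 0 < p) (hp1 : p ≤ 1)
    (hP : (fun δ : ℝ => ⨆ Δ : {Δ : H // ‖Δ‖ ≤ δ}, ⨅ γ : {γ : ℝ // 0 < γ},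
        ‖-((γ.1 : 𝕜) • R γ.1 u) + R γ.1 Δ.1‖)
      =O[𝓝[>] (0 : ℝ)] (fun δ : ℝ => δ ^ (p / (p + 1)))) :
    (fun γ : ℝ => (γ : 𝕜) • R γ u) =O[𝓝[>] (0 : ℝ)] (fun γ : ℝ => γ ^ p) :=
  lavrentiev_converse_noisy_data_general A hacc R hinv u p hp0 hp1 hP
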